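/- arXiv:2210.01567 — 3 statements merged into one kernel-verified Lean document; each statement's English description precedes it below -/
import Mathlib

section
/- In a valued field K with valuation ring O, residue map res : O → k, and angular component map ac : Kˣ → kˣ (a group homomorphism agreeing with res on units of O): if A ≤ B are subfields of K such that ac(Aˣ) ⊆ res(O ∩ A) and val(Aˣ) = val(Bˣ), then ac(Bˣ) ⊆ res(O ∩ B). -/
/-! If `v a = v b`, then `u = b / a` is a unit of `O`, so `ac b = ac a · ac u = ac a · res u`;
choosing `a ∈ A` with `ac a = res x`, `x ∈ O ∩ A`, the element `x · u ∈ O ∩ B` has residue `ac b`. -/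

section AngularComponent

variable {K Γ₀ kres : Type*} [Field K] [LinearOrderedCommGroupWithZero Γ₀] [Field kres]
  {v : Valuation K Γ₀}

lemma Valuation.div_mem_integer_of_eq {a b : K} (hab : v a = v b) : b / a ∈ v.integer := by
  rw [Valuation.mem_integer_iff, map_div₀, hab]
  exact div_self_le_one _

lemma Valuation.map_units_div_eq_one_of_eq {a b : Kˣ} (hab : v a = v b) :
    v ((b / a : Kˣ) : K) = 1 := by
  rw [Units.val_div_eq_div_val, map_div₀, hab, div_self ((Valuation.ne_zero_iff v).2 b.ne_zero)]

lemma ac_eq_ac_mul_res_div (res : v.integer →+* kres) (ac : Kˣ →* kresˣ)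
    (hac : ∀ (u : Kˣ) (hu : (u : K) ∈ v.integer),
      v (u : K) = 1 → ((ac u : kres) = res ⟨(u : K), hu⟩))
    {a b : Kˣ} (hab : v a = v b) :
    (ac b : kres) = ac a * res ⟨b / a, Valuation.div_mem_integer_of_eq hab⟩ := by
  have hu : ((b / a : Kˣ) : K) ∈ v.integer := by
    rw [Units.val_div_eq_div_val]
    exact Valuation.div_mem_integer_of_eq hab
  calc (ac b : kres) = ac a * ac (b / a) := by rw [← Units.val_mul, ← map_mul, mul_div_cancel]
    _ = ac a * res ⟨b / a, _⟩ := by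
      rw [hac _ hu (Valuation.map_units_div_eq_one_of_eq hab)]
      simp only [Units.val_div_eq_div_val]

end AngularComponent

/-- Let `K` be a valued field with valuation ring `O = v.integer`, residue map
`res : O → kres` and angular component map `ac : Kˣ → kresˣ` (a group
homomorphism agreeing with `res` on the units of `O`, i.e. on elements of
valuation `1`).  If `A ≤ B` are subfields of `K` with `ac(Aˣ) ⊆ res(O ∩ A)`
and `val(Aˣ) = val(Bˣ)`, then `ac(Bˣ) ⊆ res(O ∩ B)`. -/
theorem ac_eq_res_extend (K : Type*) [Field K]
    (Γ₀ : Type*) [LinearOrderedCommGroupWithZero Γ₀]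
    (v : Valuation K Γ₀)
    (kres : Type*) [Field kres]
    (res : v.integer →+* kres) (ac : Kˣ →* kresˣ)
    (hac : ∀ (u : Kˣ) (hu : (u : K) ∈ v.integer),
      v (u : K) = 1 → ((ac u : kres) = res ⟨(u : K), hu⟩))
    (A B : Subfield K) (hAB : A ≤ B)
    (hresA : ∀ a : Kˣ, (a : K) ∈ A →
      ∃ x : v.integer, (x : K) ∈ A ∧ res x = (ac a : kres))
    (hval : ∀ b : Kˣ, (b : K) ∈ B →
      ∃ a : Kˣ, (a : K) ∈ A ∧ v (a : K) = v (b : K)) :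
    ∀ b : Kˣ, (b : K) ∈ B →
      ∃ x : v.integer, (x : K) ∈ B ∧ res x = (ac b : kres) := by
  intro b hb
  obtain ⟨a, haA, hab⟩ := hval b hb
  obtain ⟨x, hxA, hx⟩ := hresA a haA
  refine ⟨x * ⟨b / a, Valuation.div_mem_integer_of_eq hab⟩, ?_, ?_⟩
  · exact B.mul_mem (hAB hxA) (B.div_mem hb (hAB haA))
  · rw [map_mul, hx, ac_eq_ac_mul_res_div res ac hac hab]
end

section
/- Let K be a Henselian valued field of residue characteristic zero with value group Γ and residue field k. Let a₁,…,aₙ, b₁,…,bₙ ∈ Kˣ be such that (val(a₁),…,val(aₙ)) is a ℚ-linearly independent family in ℚ ⊗ Γ and rv(aᵢ) = rv(bᵢ) for each i. Then for every polynomial P over the prime field ℚ whose nonzero coefficients have value 0, rv(P(a₁,…,aₙ)) = rv(P(b₁,…,bₙ)). -/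
/-!
Write `x ~ y` for `v (x - y) < v x`, i.e. `rv x = rv y` with `x ≠ 0`. This relation is
multiplicative, so `aᵢ ~ bᵢ` gives `a^m ~ b^m` for every monomial. Since the values of
the `aᵢ` are multiplicatively independent and the coefficients of `P` have value `1`,
distinct monomials of `P` have distinct values at `a`; hence `P(a)` has the value of its
dominant monomial, which exceeds the value of every difference of corresponding terms of
`P(a) - P(b)`.
-/

open MvPolynomial

namespace Valuation

variable {K : Type*} [Field K] {Γ₀ : Type*} [LinearOrderedCommGroupWithZero Γ₀]
  (v : Valuation K Γ₀)

theorem map_mul_sub_mul_lt {x y x' y' : K} (h : v (x - y) < v x) (h' : v (x' - y') < v x') :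
    v (x * x' - y * y') < v (x * x') := by
  have hy' : v y' = v x' := v.map_eq_of_sub_lt (by rwa [map_sub_swap])
  have hx : 0 < v x := zero_le.trans_lt h
  have hx' : 0 < v x' := zero_le.trans_lt h'
  calc v (x * x' - y * y') = v (x * (x' - y') + (x - y) * y') := by
        congr 1; ring
    _ < v (x * x') := by
      refine v.map_add_lt ?_ ?_ <;> simp only [map_mul, hy']
      · exact mul_lt_mul_of_pos_left h' hx
      · exact mul_lt_mul_of_pos_right h hx'

theorem map_prod_sub_prod_lt {ι : Type*} (s : Finset ι) {x y : ι → K}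
    (h : ∀ i ∈ s, v (x i - y i) < v (x i)) :
    v (∏ i ∈ s, x i - ∏ i ∈ s, y i) < v (∏ i ∈ s, x i) := by
  induction s using Finset.cons_induction with
  | empty => simp
  | cons i s hi ih =>
    simp only [Finset.prod_cons]
    exact v.map_mul_sub_mul_lt (h i (s.mem_cons_self i))
      (ih fun j hj => h j (Finset.mem_cons_of_mem hj))

theorem map_pow_sub_pow_lt {x y : K} (h : v (x - y) < v x) (k : ℕ) :
    v (x ^ k - y ^ k) < v (x ^ k) := by
  simpa using v.map_prod_sub_prod_lt (Finset.range k) (x := fun _ => x) (y := fun _ => y)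
    fun _ _ => h

theorem map_sum_sub_sum_lt_of_injOn {ι : Type*} {s : Finset ι} (hs : s.Nonempty)
    {f g : ι → K} (hinj : Set.InjOn (fun i => v (f i)) s)
    (h : ∀ i ∈ s, v (f i - g i) < v (f i)) :
    v (∑ i ∈ s, f i - ∑ i ∈ s, g i) < v (∑ i ∈ s, f i) := by
  classical
  obtain ⟨i₀, hi₀, hmax⟩ := s.exists_max_image (fun i => v (f i)) hs
  have hsum : v (∑ i ∈ s, f i) = v (f i₀) := by
    refine v.map_sum_eq_of_lt hi₀ fun i hi => ?_
    rw [Finset.mem_sdiff, Finset.mem_singleton] at hi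
    exact (hmax i hi.1).lt_of_ne fun hi' => hi.2 (hinj hi.1 hi₀ hi')
  rw [hsum, ← Finset.sum_sub_distrib]
  exact v.map_sum_lt (zero_le.trans_lt (h i₀ hi₀)).ne' fun i hi =>
    (h i hi).trans_le (hmax i hi)

end Valuation

theorem prod_pow_injective {ι G₀ : Type*} [Fintype ι] [CommGroupWithZero G₀] {γ : ι → G₀}
    (hγ : ∀ i, γ i ≠ 0) (hfree : ∀ c : ι → ℤ, ∏ i, γ i ^ c i = 1 → ∀ i, c i = 0) :
    Function.Injective fun m : ι →₀ ℕ => ∏ i, γ i ^ m i := by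
  intro m m' (hmm' : ∏ i, γ i ^ m i = ∏ i, γ i ^ m' i)
  have hdiv : ∏ i, γ i ^ ((m i : ℤ) - m' i) = 1 := by
    simp only [zpow_sub₀ (hγ _), zpow_natCast, Finset.prod_div_distrib]
    rw [hmm']
    exact div_self (Finset.prod_ne_zero_iff.2 fun i _ => pow_ne_zero _ (hγ i))
  ext i
  simpa [sub_eq_zero] using hfree _ hdiv i

theorem rv_eval_eq_of_rv_eq_general (K : Type*) [Field K] [CharZero K]
    (Γ₀ : Type*) [LinearOrderedCommGroupWithZero Γ₀]
    (v : Valuation K Γ₀)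
    (n : ℕ) (a b : Fin n → Kˣ)
    (hfree : ∀ c : Fin n → ℤ, (∏ i, v (a i : K) ^ c i) = 1 → ∀ i, c i = 0)
    (hrv : ∀ i, v ((a i : K) - (b i : K)) < v (a i : K))
    (P : MvPolynomial (Fin n) ℚ)
    (hcoeff : ∀ m ∈ P.support, v (algebraMap ℚ K (P.coeff m)) = 1) :
    aeval (fun i => (a i : K)) P = aeval (fun i => (b i : K)) P ∨
      v (aeval (fun i => (a i : K)) P - aeval (fun i => (b i : K)) P) <
        v (aeval (fun i => (a i : K)) P) := by
  obtain hP | hP := P.support.eq_empty_or_nonempty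
  · left
    rw [support_eq_empty.1 hP, map_zero, map_zero]
  right
  simp only [aeval_def, eval₂_eq']
  refine v.map_sum_sub_sum_lt_of_injOn hP (fun m hm m' hm' hmm' => ?_) fun m hm => ?_
  · refine prod_pow_injective (fun i => by simp) hfree ?_
    simpa only [map_mul, hcoeff m hm, hcoeff m' hm', one_mul, map_prod, map_pow] using hmm'
  · have hc : v (algebraMap ℚ K (P.coeff m) - algebraMap ℚ K (P.coeff m)) <
        v (algebraMap ℚ K (P.coeff m)) := by
      rw [sub_self, map_zero, hcoeff m hm]
      exact zero_lt_one
    exact v.map_mul_sub_mul_lt hc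
      (v.map_prod_sub_prod_lt _ fun i _ => v.map_pow_sub_pow_lt (hrv i) (m i))

/-- Let `K` be a Henselian valued field of residue characteristic zero (the
valuation `v` is written multiplicatively, so additive value `0` corresponds to
`v x = 1`, and `rv(x) = rv(y)` means `x = y = 0` or `v (x - y) < v x`).
If `a₁,…,aₙ, b₁,…,bₙ ∈ Kˣ` are such that the values `v(aᵢ)` are ℚ-linearly
independent in the divisible hull of the value group (no nontrivial integer
power product is `1`) and `rv(aᵢ) = rv(bᵢ)`, then for every polynomial `P`
over ℚ whose nonzero coefficients have value `0` we have
`rv(P(a)) = rv(P(b))`. -/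
theorem rv_eval_eq_of_rv_eq (K : Type*) [Field K] [CharZero K]
    (Γ₀ : Type*) [LinearOrderedCommGroupWithZero Γ₀]
    (v : Valuation K Γ₀)
    [HenselianLocalRing v.valuationSubring]
    [CharZero (IsLocalRing.ResidueField v.valuationSubring)]
    (n : ℕ) (a b : Fin n → Kˣ)
    (hfree : ∀ c : Fin n → ℤ, (∏ i, v (a i : K) ^ c i) = 1 → ∀ i, c i = 0)
    (hrv : ∀ i, v ((a i : K) - (b i : K)) < v (a i : K))
    (P : MvPolynomial (Fin n) ℚ)
    (hcoeff : ∀ m ∈ P.support, v (algebraMap ℚ K (P.coeff m)) = 1) :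
    aeval (fun i => (a i : K)) P = aeval (fun i => (b i : K)) P ∨
      v (aeval (fun i => (a i : K)) P - aeval (fun i => (b i : K)) P) <
        v (aeval (fun i => (a i : K)) P) :=
  rv_eval_eq_of_rv_eq_general K Γ₀ v n a b hfree hrv P hcoeff
end

section
/- Let M be a monster model, A a small set, Z, Z' A-definable sets, R ⊆ Z × Z' an A-definable relation, and m < ω such that for every x ∈ Z the fiber R_x = {y ∈ Z' : R(x,y)} has exactly m elements. If Y ⊆ Z' is a definable set that divides over A, then X = {x ∈ Z : ∃y ∈ Y, R(x,y)} divides over A. -/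
/-! `X` divides via the same sequence `σ`, with bound `m N + 1`. If `x` lies in `m N + 1` of the
conjugates `σₙ • X`, each corresponding `σₙ • Y` meets the fiber `R_x`, which by invariance of `R`
has `m` elements; by pigeonhole some point of `R_x` lies in `N + 1` of the `σₙ • Y`, although any
`N` of them have empty intersection. -/

open Pointwise Classical

/-- Abstract dividing over a parameter set `A` in a monster model: `G` stands
for the automorphism group `Aut(M/A)` acting on the relevant sorts. -/
def DividesOver (G : Type*) [Group G] {β : Type*} [MulAction G β]
    (Y : Set β) : Prop :=
  ∃ (N : ℕ) (σ : ℕ → G), σ 0 = 1 ∧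
    ∀ P : Finset ℕ, P.card = N → (⋂ n ∈ P, σ n • Y) = ∅

def IsInconsistent {β : Type*} (N : ℕ) (T : ℕ → Set β) : Prop :=
  ∀ Q : Finset ℕ, Q.card = N → ⋂ n ∈ Q, T n = ∅

theorem IsInconsistent.exists_disjoint {β : Type*} {N : ℕ} {T : ℕ → Set β}
    (hT : IsInconsistent N T) (s : Finset β) (P : Finset ℕ) (hP : s.card * N < P.card) :
    ∃ n ∈ P, Disjoint (T n) s := by
  by_contra! hmeet
  have hcover : P ⊆ s.biUnion fun z => P.filter (z ∈ T ·) := fun n hn => by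
    obtain ⟨z, hzT, hzs⟩ := Set.not_disjoint_iff.mp (hmeet n hn)
    exact Finset.mem_biUnion.mpr ⟨z, hzs, Finset.mem_filter.mpr ⟨hn, hzT⟩⟩
  obtain ⟨z, -, hz⟩ : ∃ z ∈ s, N < (P.filter (z ∈ T ·)).card := by
    by_contra! hle
    refine hP.not_ge ?_
    calc P.card ≤ (s.biUnion fun z => P.filter (z ∈ T ·)).card := Finset.card_le_card hcover
      _ ≤ ∑ z ∈ s, (P.filter (z ∈ T ·)).card := Finset.card_biUnion_le
      _ ≤ s.card * N := by simpa using Finset.sum_le_card_nsmul s _ N hle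
  obtain ⟨Q, hQ, hQN⟩ := Finset.exists_subset_card_eq hz.le
  have hzQ : z ∈ ⋂ n ∈ Q, T n :=
    Set.mem_iInter₂.mpr fun n hn => (Finset.mem_filter.mp (hQ hn)).2
  simp [hT Q hQN] at hzQ

section InvariantRelation

variable {G α β : Type*} [Group G] [MulAction G α] [MulAction G β] {R : Set (α × β)}

theorem mem_smul_sep_exists_rel_iff
    (hR : ∀ (g : G) (x : α) (y : β), (x, y) ∈ R ↔ (g • x, g • y) ∈ R)
    {Z : Set α} {Y : Set β} {g : G} {x : α} :
    x ∈ g • {x ∈ Z | ∃ y ∈ Y, (x, y) ∈ R} ↔ g⁻¹ • x ∈ Z ∧ ∃ y ∈ g • Y, (x, y) ∈ R := by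
  rw [Set.mem_smul_set_iff_inv_smul_mem, Set.mem_sep_iff]
  refine and_congr_right fun _ => ⟨fun ⟨y, hy, hxy⟩ => ⟨g • y, Set.smul_mem_smul_set hy, ?_⟩,
    fun ⟨y, hy, hxy⟩ => ⟨g⁻¹ • y, Set.mem_smul_set_iff_inv_smul_mem.mp hy, (hR g⁻¹ x y).mp hxy⟩⟩
  simpa using (hR g _ y).mp hxy

theorem rel_iff_mem_smul_finset
    (hR : ∀ (g : G) (x : α) (y : β), (x, y) ∈ R ↔ (g • x, g • y) ∈ R)
    {g : G} {x : α} {s : Finset β} (hs : ∀ y, (g⁻¹ • x, y) ∈ R ↔ y ∈ s) (y : β) :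
    (x, y) ∈ R ↔ y ∈ g • s := by
  rw [hR g⁻¹, hs, Finset.inv_smul_mem_iff]

end InvariantRelation

theorem divides_of_finite_fibers_general (G : Type*) [Group G]
    (α β : Type*) [MulAction G α] [MulAction G β]
    (Z : Set α) (R : Set (α × β)) (m : ℕ)
    (hR : ∀ (g : G) (x : α) (y : β), (x, y) ∈ R ↔ (g • x, g • y) ∈ R)
    (hfib : ∀ x ∈ Z, ∃ s : Finset β, s.card = m ∧ ∀ y : β, (x, y) ∈ R ↔ y ∈ s)
    (Y : Set β) (hdiv : DividesOver G Y) :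
    DividesOver G {x ∈ Z | ∃ y ∈ Y, (x, y) ∈ R} := by
  obtain ⟨N, σ, hσ0, hY⟩ := hdiv
  refine ⟨m * N + 1, σ, hσ0, fun P hP => Set.eq_empty_of_forall_notMem fun x hx => ?_⟩
  have hmem : ∀ n ∈ P, (σ n)⁻¹ • x ∈ Z ∧ ∃ y ∈ σ n • Y, (x, y) ∈ R := fun n hn =>
    (mem_smul_sep_exists_rel_iff hR).mp (Set.mem_iInter₂.mp hx n hn)
  obtain ⟨n₀, hn₀⟩ : P.Nonempty := Finset.card_pos.mp (by rw [hP]; omega)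
  obtain ⟨s, hs, hfiber⟩ := hfib _ (hmem n₀ hn₀).1
  obtain ⟨n, hn, hdisj⟩ := IsInconsistent.exists_disjoint hY (σ n₀ • s) P (by
    rw [Finset.card_smul_finset, hs, hP]; omega)
  obtain ⟨y, hy, hxy⟩ := (hmem n hn).2
  exact hdisj.notMem_of_mem_left hy
    (Finset.mem_coe.mpr ((rel_iff_mem_smul_finset hR hfiber y).mp hxy))

/-- Let `Z`, `Z'` be `A`-definable (hence `Aut(M/A)`-invariant) sets,
`R ⊆ Z × Z'` an `A`-definable relation all of whose fibers `R_x` (for `x ∈ Z`)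
have exactly `m` elements.  If `Y ⊆ Z'` is a definable set dividing over `A`,
then `X = {x ∈ Z | ∃ y ∈ Y, R(x,y)}` divides over `A`. -/
theorem divides_of_finite_fibers (G : Type*) [Group G]
    (α β : Type*) [MulAction G α] [MulAction G β]
    (Z : Set α) (Z' : Set β) (R : Set (α × β)) (m : ℕ)
    (hZ : ∀ g : G, g • Z = Z) (hZ' : ∀ g : G, g • Z' = Z')
    (hR : ∀ (g : G) (x : α) (y : β), (x, y) ∈ R ↔ (g • x, g • y) ∈ R)
    (hRsub : R ⊆ Z ×ˢ Z')
    (hfib : ∀ x ∈ Z, ∃ s : Finset β, s.card = m ∧ ∀ y : β, (x, y) ∈ R ↔ y ∈ s)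
    (Y : Set β) (hYZ' : Y ⊆ Z') (hdiv : DividesOver G Y) :
    DividesOver G {x ∈ Z | ∃ y ∈ Y, (x, y) ∈ R} :=
  divides_of_finite_fibers_general G α β Z R m hR hfib Y hdiv
end
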